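/- Let C : H → H be a ℤ-linear operator that commutes with ∂_s for every simple reflection s ∈ S. Then there exists a unique function c : W → ℤ such that for every σ ∈ W one has C(δ_σ) = Σ_{π ∈ W, ℓ(πσ) = ℓ(σ) − ℓ(π)} c(π) · δ_{πσ} (a finite sum). Moreover c(π) equals the coefficient of δ_e in C(δ_{π⁻¹}), where e is the identity of W. In other words, every operator commuting with all divided difference operators ∂_s is given by a unique (possibly infinite) linear combination Σ_π c(π) μ_π of martial operators. -/

import Mathlib

open CoxeterSystem

/-- The divided difference operator `∂_s` on the free `ℤ`-module with basis
`{δ_w : w ∈ W}`: `∂_s δ_w = δ_{w s}` if `ℓ(w s) < ℓ(w)`, and `0` otherwise. -/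
noncomputable def partial' {B W : Type*} [Group W] (M : CoxeterMatrix B)
    (cs : CoxeterSystem M W) (i : B) : Module.End ℤ (W →₀ ℤ) :=
  Finsupp.lsum ℤ fun w =>
    if cs.length (w * cs.simple i) < cs.length w then Finsupp.lsingle (w * cs.simple i) else 0

/-!
Write `C δ_σ = Σ_τ a(σ, τ) δ_τ`. If `s` is a right descent of `τ`, commuting `C` with `∂_s`
gives `a(σ, τ) = a(σ s, τ s)` when `s` is also a right descent of `σ`, and `a(σ, τ) = 0`
otherwise. Both moves keep `τ σ⁻¹` fixed, so induction on `ℓ(τ)` shows that `a(σ, π σ)` is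
`a(π⁻¹, e)` when `ℓ(π σ) + ℓ(π) = ℓ(σ)` and `0` otherwise: this is the existence part, with
`c(π) = a(π⁻¹, e)`. Conversely, reading off the coefficient of `δ_e` in the expansion of
`C δ_{π⁻¹}` recovers `c(π)`; the expansion is a genuine finite sum because, by induction on
`ℓ(π)`, `c` already agrees with `a(·⁻¹, e)` on the shorter elements that occur in it.
-/

lemma Finsupp.finsum_single_mul_right_apply {G M : Type*} [Group G] [AddCommMonoid M]
    {d : G → M} (hd : (Function.support d).Finite) (σ τ : G) :
    (∑ᶠ π, Finsupp.single (π * σ) (d π)) τ = d (τ * σ⁻¹) := by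
  classical
  have hfin : (Function.support fun π => Finsupp.single (π * σ) (d π)).Finite :=
    hd.subset fun π hπ h => hπ (by simp [h])
  rw [← Finsupp.applyAddHom_apply, AddMonoidHom.map_finsum _ hfin,
    finsum_eq_single _ (τ * σ⁻¹) fun π hπ => ?_]
  · simp
  · rw [Finsupp.applyAddHom_apply, Finsupp.single_apply, if_neg fun h => hπ (by rw [← h]; group)]

section Commutant

variable {B W : Type*} [Group W] {M : CoxeterMatrix B} (cs : CoxeterSystem M W)

lemma partial'_single (i : B) (w : W) (a : ℤ) :
    partial' M cs i (Finsupp.single w a) =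
      if cs.length (w * cs.simple i) < cs.length w
      then Finsupp.single (w * cs.simple i) a else 0 := by
  simp only [partial', Finsupp.lsum_single]
  split <;> simp

lemma partial'_apply (i : B) (f : W →₀ ℤ) (τ : W) :
    partial' M cs i f τ =
      if cs.length τ < cs.length (τ * cs.simple i) then f (τ * cs.simple i) else 0 := by
  induction f using Finsupp.induction_linear with
  | zero => simp
  | add f g hf hg =>
    simp only [map_add, Finsupp.add_apply, hf, hg]
    split <;> simp
  | single w a =>
    rw [partial'_single]
    by_cases hw : w = τ * cs.simple i
    · subst hw
      rw [simple_mul_simple_cancel_right]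
      split <;> simp
    · have hws : w * cs.simple i ≠ τ := fun h => hw (by rw [← h, simple_mul_simple_cancel_right])
      split <;> split <;> simp [hw, hws]

variable {cs} {C : (W →₀ ℤ) →ₗ[ℤ] (W →₀ ℤ)} {i : B}

lemma apply_single_eq_of_isRightDescent (hC : C ∘ₗ partial' M cs i = partial' M cs i ∘ₗ C)
    {σ τ : W} (hσ : cs.IsRightDescent σ i) (hτ : cs.IsRightDescent τ i) :
    C (Finsupp.single σ 1) τ = C (Finsupp.single (σ * cs.simple i) 1) (τ * cs.simple i) := by
  unfold IsRightDescent at hσ hτ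
  have hδ : partial' M cs i (Finsupp.single σ 1) = Finsupp.single (σ * cs.simple i) 1 := by
    rw [partial'_single, if_pos hσ]
  rw [← hδ, ← LinearMap.comp_apply, hC, LinearMap.comp_apply, partial'_apply,
    simple_mul_simple_cancel_right, if_pos hτ]

lemma apply_single_eq_zero_of_not_isRightDescent
    (hC : C ∘ₗ partial' M cs i = partial' M cs i ∘ₗ C)
    {σ τ : W} (hσ : ¬cs.IsRightDescent σ i) (hτ : cs.IsRightDescent τ i) :
    C (Finsupp.single σ 1) τ = 0 := by
  rw [not_isRightDescent_iff] at hσ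
  unfold IsRightDescent at hτ
  have hδ : partial' M cs i (Finsupp.single (σ * cs.simple i) 1) = Finsupp.single σ 1 := by
    rw [partial'_single, simple_mul_simple_cancel_right, if_pos (by omega)]
  rw [← hδ, ← LinearMap.comp_apply, hC, LinearMap.comp_apply, partial'_apply,
    if_neg (Nat.lt_asymm hτ)]

lemma apply_single_mul_eq (hC : ∀ i : B, C ∘ₗ partial' M cs i = partial' M cs i ∘ₗ C)
    (π σ : W) :
    C (Finsupp.single σ 1) (π * σ) =
      if cs.length (π * σ) + cs.length π = cs.length σ
      then C (Finsupp.single π⁻¹ 1) 1 else 0 := by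
  induction hn : cs.length (π * σ) using Nat.strong_induction_on generalizing σ with
  | _ n ih =>
  by_cases hπσ : π * σ = 1
  · obtain rfl : σ = π⁻¹ := eq_inv_of_mul_eq_one_right hπσ
    simp [← hn, cs.length_inv]
  obtain ⟨i, hi⟩ := cs.exists_rightDescent_of_ne_one hπσ
  have hi' := cs.isRightDescent_iff.mp hi
  by_cases hσ : cs.IsRightDescent σ i
  · have hσ' := cs.isRightDescent_iff.mp hσ
    have hshorter : cs.length (π * (σ * cs.simple i)) < n := by rw [← mul_assoc]; omega
    rw [apply_single_eq_of_isRightDescent (hC i) hσ hi, mul_assoc, ih _ hshorter _ rfl,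
      ← mul_assoc]
    exact if_congr (by omega) rfl rfl
  · have hσ' := cs.not_isRightDescent_iff.mp hσ
    have hlen : cs.length (σ * cs.simple i) ≤ cs.length π + cs.length (π * σ * cs.simple i) := by
      simpa [cs.length_inv, mul_assoc] using cs.length_mul_le π⁻¹ (π * σ * cs.simple i)
    rw [apply_single_eq_zero_of_not_isRightDescent (hC i) hσ hi, if_neg (by omega)]

lemma apply_single_eq_finsum (hC : ∀ i : B, C ∘ₗ partial' M cs i = partial' M cs i ∘ₗ C)
    (σ : W) :
    C (Finsupp.single σ 1) = ∑ᶠ π, Finsupp.single (π * σ)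
      (if cs.length (π * σ) + cs.length π = cs.length σ
        then C (Finsupp.single π⁻¹ 1) 1 else 0) := by
  have hfin : (Function.support fun π => C (Finsupp.single σ 1) (π * σ)).Finite :=
    (C (Finsupp.single σ 1)).hasFiniteSupport.preimage (mul_left_injective σ).injOn
  simp only [← apply_single_mul_eq hC]
  ext τ
  rw [Finsupp.finsum_single_mul_right_apply hfin, inv_mul_cancel_right]

lemma eq_apply_single_inv_of_eq_finsum
    (hC : ∀ i : B, C ∘ₗ partial' M cs i = partial' M cs i ∘ₗ C) {c : W → ℤ}
    (h : ∀ σ : W, C (Finsupp.single σ 1) = ∑ᶠ π, Finsupp.single (π * σ)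
      (if cs.length (π * σ) + cs.length π = cs.length σ then c π else 0))
    (π : W) : c π = C (Finsupp.single π⁻¹ 1) 1 := by
  induction hn : cs.length π using Nat.strong_induction_on generalizing π with
  | _ n ih =>
  have hfin : (Function.support fun ρ =>
      if cs.length (ρ * π⁻¹) + cs.length ρ = cs.length π⁻¹ then c ρ else 0).Finite := by
    refine (((C (Finsupp.single π⁻¹ 1)).hasFiniteSupport.preimage
      (mul_left_injective π⁻¹).injOn).insert π).subset fun ρ hρ => ?_
    by_cases hρπ : ρ = π
    · exact Or.inl hρπ
    have hcond : cs.length (ρ * π⁻¹) + cs.length ρ = cs.length π⁻¹ := by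
      by_contra hc
      exact hρ (if_neg hc)
    have hpos : cs.length (ρ * π⁻¹) ≠ 0 := by
      rwa [Ne, length_eq_zero_iff, mul_inv_eq_one]
    rw [length_inv] at hcond
    refine Or.inr (show C (Finsupp.single π⁻¹ 1) (ρ * π⁻¹) ≠ 0 from ?_)
    rw [apply_single_mul_eq hC, length_inv, ← ih _ (by omega) ρ rfl]
    simpa only [Function.mem_support, length_inv] using hρ
  have hδ := DFunLike.congr_fun (h π⁻¹) 1
  rw [Finsupp.finsum_single_mul_right_apply hfin, one_mul, inv_inv, mul_inv_cancel,
    length_one, zero_add, length_inv, if_pos rfl] at hδ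
  exact hδ.symm

lemma ite_length_smul_single_one (c : ℤ) (π σ : W) :
    (if (cs.length (π * σ) : ℤ) = (cs.length σ : ℤ) - (cs.length π : ℤ)
      then c • Finsupp.single (π * σ) (1 : ℤ) else 0) =
    Finsupp.single (π * σ) (if cs.length (π * σ) + cs.length π = cs.length σ then c else 0) := by
  have hcond : ((cs.length (π * σ) : ℤ) = (cs.length σ : ℤ) - (cs.length π : ℤ)) ↔
      cs.length (π * σ) + cs.length π = cs.length σ := by
    omega
  simp only [hcond, Finsupp.smul_single_one]
  split_ifs <;> simp

end Commutant

/-- Every `ℤ`-linear operator `C` on `H` commuting with all divided difference operators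
`∂_s` is given by a unique (possibly infinite) linear combination `Σ_π c(π) μ_π` of
martial operators: there is a unique `c : W → ℤ` with
`C(δ_σ) = Σ_{π, ℓ(πσ) = ℓ(σ) − ℓ(π)} c(π) · δ_{πσ}` for all `σ` (a finite sum),
and moreover `c(π)` is the coefficient of `δ_e` in `C(δ_{π⁻¹})`. -/
theorem commutant_of_divided_differences
    {B W : Type*} [Group W] (M : CoxeterMatrix B) (cs : CoxeterSystem M W)
    (C : (W →₀ ℤ) →ₗ[ℤ] (W →₀ ℤ))
    (hC : ∀ i : B, C ∘ₗ partial' M cs i = partial' M cs i ∘ₗ C) :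
    (∃! c : W → ℤ, ∀ σ : W,
      C (Finsupp.single σ 1)
        = ∑ᶠ π : W,
            if (cs.length (π * σ) : ℤ) = (cs.length σ : ℤ) - (cs.length π : ℤ)
            then c π • Finsupp.single (π * σ) (1 : ℤ) else 0)
    ∧ (∀ c : W → ℤ,
        (∀ σ : W, C (Finsupp.single σ 1)
          = ∑ᶠ π : W,
              if (cs.length (π * σ) : ℤ) = (cs.length σ : ℤ) - (cs.length π : ℤ)
              then c π • Finsupp.single (π * σ) (1 : ℤ) else 0) →
        ∀ π : W, c π = C (Finsupp.single π⁻¹ 1) 1) := by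
  simp only [ite_length_smul_single_one]
  exact ⟨⟨fun π => C (Finsupp.single π⁻¹ 1) 1, apply_single_eq_finsum hC,
      fun c hc => funext (eq_apply_single_inv_of_eq_finsum hC hc)⟩,
    fun c hc => eq_apply_single_inv_of_eq_finsum hC hc⟩
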